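/- Let a₁,b₁,c₁,a₂,b₂,c₂ ∈ C and suppose (b₁-b₂)² ≠ 4(a₁-a₂)(c₁-c₂). Let z₁, z₂ be the two distinct roots of (a₁-a₂)z² + (b₁-b₂)z + (c₁-c₂) = 0. Define g_i = a_i z₁z₂ + (b_i/2)(z₁+z₂) + c_i for i = 1,2, and p = (a₁z₁² + b₁z₁ + c₁)(a₁z₂² + b₁z₂ + c₁). Then with D_i = b_i² - 4a_ic_i and J = 2(a₁c₂ + a₂c₁) - b₁b₂, and for any ζ ∈ C, the identity g₁² - 2g₁g₂ζ + g₂² - p(1-ζ²) = 0 is equivalent to (J(1+ζ) + D₁ + D₂)² = D₁D₂(1-ζ)², up to multiplication by a nonzero factor depending only on a₁-a₂, b₁-b₂, c₁-c₂. (In particular, the condition g₁² - 2g₁g₂cos θ + g₂² = p sin²θ can be rewritten purely in terms of the invariants D₁, D₂, J and cos θ.) -/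

import Mathlib

/-!
Since `z₁, z₂` are the distinct roots of `q₁ - q₂ = Az² + Bz + C`, Vieta gives `A(z₁+z₂) = -B` and
`A z₁z₂ = C`, so every symmetric expression in `z₁, z₂` becomes, after clearing powers of `A`, an
invariant of the pair `(qᵢ, q₁ - q₂)`. Thus `2A gᵢ` is the jacobian of `qᵢ` with `q₁ - q₂`, which is
`-(J + D₁)` resp. `J + D₂`, and `4A² p` is the resultant `J(q₁, q₁-q₂)² - D₁ · disc(q₁ - q₂)`,
which is `J² - D₁D₂`. Substituting these three values, the identity is a polynomial identity in
`J, D₁, D₂, ζ`.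
-/

namespace BinaryQuadric

variable {R : Type*} [CommRing R]

def jacobian (a₁ b₁ c₁ a₂ b₂ c₂ : R) : R :=
  2 * (a₁ * c₂ + a₂ * c₁) - b₁ * b₂

theorem jacobian_self_sub (a₁ b₁ c₁ a₂ b₂ c₂ : R) :
    jacobian a₁ b₁ c₁ (a₁ - a₂) (b₁ - b₂) (c₁ - c₂)
      = -(jacobian a₁ b₁ c₁ a₂ b₂ c₂ + discrim a₁ b₁ c₁) := by
  unfold jacobian discrim; ring

theorem jacobian_sub_self (a₁ b₁ c₁ a₂ b₂ c₂ : R) :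
    jacobian a₂ b₂ c₂ (a₁ - a₂) (b₁ - b₂) (c₁ - c₂)
      = jacobian a₁ b₁ c₁ a₂ b₂ c₂ + discrim a₂ b₂ c₂ := by
  unfold jacobian discrim; ring

theorem discrim_sub (a₁ b₁ c₁ a₂ b₂ c₂ : R) :
    discrim (a₁ - a₂) (b₁ - b₂) (c₁ - c₂)
      = discrim a₁ b₁ c₁ + discrim a₂ b₂ c₂ + 2 * jacobian a₁ b₁ c₁ a₂ b₂ c₂ := by
  unfold jacobian discrim; ring

theorem vieta_of_ne [NoZeroDivisors R] {A B C z₁ z₂ : R} (hne : z₁ ≠ z₂)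
    (hz₁ : A * z₁ ^ 2 + B * z₁ + C = 0) (hz₂ : A * z₂ ^ 2 + B * z₂ + C = 0) :
    A * (z₁ + z₂) = -B ∧ A * (z₁ * z₂) = C := by
  have hfactor : (z₁ - z₂) * (A * (z₁ + z₂) + B) = 0 := by linear_combination hz₁ - hz₂
  have hsum : A * (z₁ + z₂) = -B :=
    eq_neg_of_add_eq_zero_left <| (mul_eq_zero.mp hfactor).resolve_left (sub_ne_zero.mpr hne)
  exact ⟨hsum, by linear_combination z₁ * hsum - hz₁⟩

/-- The right side is the resultant of `az² + bz + c` and `Az² + Bz + C`. -/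
theorem four_mul_sq_mul_eval_mul_eval {a b c A B C z₁ z₂ : R}
    (hsum : A * (z₁ + z₂) = -B) (hprod : A * (z₁ * z₂) = C) :
    4 * A ^ 2 * ((a * z₁ ^ 2 + b * z₁ + c) * (a * z₂ ^ 2 + b * z₂ + c))
      = jacobian a b c A B C ^ 2 - discrim a b c * discrim A B C := by
  unfold jacobian discrim
  linear_combination
    4 * (a * b * C + a * c * (A * (z₁ + z₂) - B) + b * c * A) * hsum
      + 4 * (a ^ 2 * (A * (z₁ * z₂) + C) + a * b * (A * (z₁ + z₂)) - 2 * a * c * A + b ^ 2 * A)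
        * hprod

theorem two_mul_mul_polar_eq_jacobian {K : Type*} [Field K] [NeZero (2 : K)] {a b c A B C s m : K}
    (hsum : A * s = -B) (hprod : A * m = C) :
    2 * A * (a * m + b / 2 * s + c) = jacobian a b c A B C := by
  unfold jacobian
  have hhalf : 2 * (b / 2) = b := mul_div_cancel₀ b two_ne_zero
  linear_combination 2 * a * hprod + b * hsum + A * s * hhalf

end BinaryQuadric

open BinaryQuadric in
theorem stmt_18_general (a₁ b₁ c₁ a₂ b₂ c₂ z₁ z₂ : ℂ)
    (ha : a₁ ≠ a₂)
    (hne : z₁ ≠ z₂)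
    (hz₁ : (a₁ - a₂) * z₁ ^ 2 + (b₁ - b₂) * z₁ + (c₁ - c₂) = 0)
    (hz₂ : (a₁ - a₂) * z₂ ^ 2 + (b₁ - b₂) * z₂ + (c₁ - c₂) = 0)
    (g₁ g₂ p D₁ D₂ J : ℂ)
    (hg₁ : g₁ = a₁ * z₁ * z₂ + (b₁ / 2) * (z₁ + z₂) + c₁)
    (hg₂ : g₂ = a₂ * z₁ * z₂ + (b₂ / 2) * (z₁ + z₂) + c₂)
    (hp : p = (a₁ * z₁ ^ 2 + b₁ * z₁ + c₁) * (a₁ * z₂ ^ 2 + b₁ * z₂ + c₁))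
    (hD₁ : D₁ = b₁ ^ 2 - 4 * a₁ * c₁) (hD₂ : D₂ = b₂ ^ 2 - 4 * a₂ * c₂)
    (hJ : J = 2 * (a₁ * c₂ + a₂ * c₁) - b₁ * b₂) :
    ∃ K : ℂ, K = 1 / (4 * (a₁ - a₂) ^ 2) ∧ K ≠ 0 ∧
      ∀ ζ : ℂ, g₁ ^ 2 - 2 * g₁ * g₂ * ζ + g₂ ^ 2 - p * (1 - ζ ^ 2)
        = K * ((J * (1 + ζ) + D₁ + D₂) ^ 2 - D₁ * D₂ * (1 - ζ) ^ 2) := by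
  have hA : (4 : ℂ) * (a₁ - a₂) ^ 2 ≠ 0 := by simp [sub_ne_zero.mpr ha]
  obtain ⟨hsum, hprod⟩ := vieta_of_ne hne hz₁ hz₂
  change D₁ = discrim a₁ b₁ c₁ at hD₁
  change D₂ = discrim a₂ b₂ c₂ at hD₂
  change J = jacobian a₁ b₁ c₁ a₂ b₂ c₂ at hJ
  have hg₁' : 2 * (a₁ - a₂) * g₁ = -(J + D₁) := by
    rw [hg₁, mul_assoc a₁, two_mul_mul_polar_eq_jacobian hsum hprod, jacobian_self_sub, hJ, hD₁]
  have hg₂' : 2 * (a₁ - a₂) * g₂ = J + D₂ := by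
    rw [hg₂, mul_assoc a₂, two_mul_mul_polar_eq_jacobian hsum hprod, jacobian_sub_self, hJ, hD₂]
  have hp' : 4 * (a₁ - a₂) ^ 2 * p = J ^ 2 - D₁ * D₂ := by
    rw [hp, four_mul_sq_mul_eval_mul_eval hsum hprod, jacobian_self_sub, discrim_sub, hJ, hD₁, hD₂]
    ring
  refine ⟨_, rfl, one_div_ne_zero hA, fun ζ => ?_⟩
  rw [one_div_mul_eq_div, eq_div_iff hA]
  linear_combination (2 * (a₁ - a₂) * g₁ - (J + D₁) - 2 * ζ * (2 * (a₁ - a₂) * g₂)) * hg₁'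
    + (2 * (a₁ - a₂) * g₂ + J + D₂ + 2 * ζ * (J + D₁)) * hg₂' - (1 - ζ ^ 2) * hp'

/-- With `z₁ ≠ z₂` the roots of `(a₁-a₂)z² + (b₁-b₂)z + (c₁-c₂) = 0`,
`gᵢ = aᵢz₁z₂ + (bᵢ/2)(z₁+z₂) + cᵢ`, `p = q₁(z₁)q₁(z₂)`, `Dᵢ = bᵢ² - 4aᵢcᵢ` and
`J = 2(a₁c₂+a₂c₁) - b₁b₂`, for every `ζ` the quantity
`g₁² - 2g₁g₂ζ + g₂² - p(1-ζ²)` equals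
`(J(1+ζ) + D₁ + D₂)² - D₁D₂(1-ζ)²` up to the nonzero factor `1/(4(a₁-a₂)²)`
depending only on the coefficient differences. -/
theorem stmt_18 (a₁ b₁ c₁ a₂ b₂ c₂ z₁ z₂ : ℂ)
    (ha : a₁ ≠ a₂)
    (hdisc : (b₁ - b₂) ^ 2 ≠ 4 * (a₁ - a₂) * (c₁ - c₂))
    (hne : z₁ ≠ z₂)
    (hz₁ : (a₁ - a₂) * z₁ ^ 2 + (b₁ - b₂) * z₁ + (c₁ - c₂) = 0)
    (hz₂ : (a₁ - a₂) * z₂ ^ 2 + (b₁ - b₂) * z₂ + (c₁ - c₂) = 0)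
    (g₁ g₂ p D₁ D₂ J : ℂ)
    (hg₁ : g₁ = a₁ * z₁ * z₂ + (b₁ / 2) * (z₁ + z₂) + c₁)
    (hg₂ : g₂ = a₂ * z₁ * z₂ + (b₂ / 2) * (z₁ + z₂) + c₂)
    (hp : p = (a₁ * z₁ ^ 2 + b₁ * z₁ + c₁) * (a₁ * z₂ ^ 2 + b₁ * z₂ + c₁))
    (hD₁ : D₁ = b₁ ^ 2 - 4 * a₁ * c₁) (hD₂ : D₂ = b₂ ^ 2 - 4 * a₂ * c₂)
    (hJ : J = 2 * (a₁ * c₂ + a₂ * c₁) - b₁ * b₂) :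
    ∃ K : ℂ, K = 1 / (4 * (a₁ - a₂) ^ 2) ∧ K ≠ 0 ∧
      ∀ ζ : ℂ, g₁ ^ 2 - 2 * g₁ * g₂ * ζ + g₂ ^ 2 - p * (1 - ζ ^ 2)
        = K * ((J * (1 + ζ) + D₁ + D₂) ^ 2 - D₁ * D₂ * (1 - ζ) ^ 2) :=
  stmt_18_general a₁ b₁ c₁ a₂ b₂ c₂ z₁ z₂ ha hne hz₁ hz₂ g₁ g₂ p D₁ D₂ J hg₁ hg₂ hp hD₁ hD₂ hJ
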